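/- (Proposition characterization, Hopf–Lax form.) Let J be a nonempty closed interval of ℝ, and suppose u_T is left continuous, takes values in J, and satisfies the Oleinik condition (O) at T. Let π_{u_T}(x) := x − T·f'(u_T(x)). Then for every Lipschitz function U_o : ℝ → ℝ the following are equivalent: (a) S_T U_o = U_T and U_o'(x) ∈ J for a.e. x; (b) (i) U_o(x) ≥ U_o^♭(x) for all x ∈ ℝ, (ii) U_o = U_o^♭ on the closure of π_{u_T}(ℝ), and (iii) U_o'(x) ∈ J for a.e. x. -/

import Mathlib

open Filter MeasureTheory

/-- Condition (f): `f` is `C²`, strongly convex (`f'' > 0` everywhere), and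
`f' → ∓∞` at `∓∞`. -/
def CondF (f : ℝ → ℝ) : Prop :=
  ContDiff ℝ 2 f ∧ (∀ x, 0 < deriv (deriv f) x) ∧
    Tendsto (deriv f) atBot atBot ∧ Tendsto (deriv f) atTop atTop

/-- The Legendre transform `f*(y) = sup_x (y·x − f(x))`. -/
noncomputable def legendre (f : ℝ → ℝ) (y : ℝ) : ℝ :=
  sSup (Set.range fun x => y * x - f x)

/-- `U_T(x) = ∫_{x̌}^x u_T`. -/
noncomputable def UT (uT : ℝ → ℝ) (xc x : ℝ) : ℝ := ∫ ξ in xc..x, uT ξ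

/-- `U_o^♭(x) = sup_ξ [U_T(ξ) − T f*((ξ−x)/T)]`. -/
noncomputable def Uflat (f : ℝ → ℝ) (T : ℝ) (uT : ℝ → ℝ) (xc x : ℝ) : ℝ :=
  sSup (Set.range fun ξ => UT uT xc ξ - T * legendre f ((ξ - x) / T))

/-- `M(x)`: the set of maximizers in the definition of `U_o^♭(x)`. -/
def MSet (f : ℝ → ℝ) (T : ℝ) (uT : ℝ → ℝ) (xc x : ℝ) : Set ℝ :=
  {ξ | UT uT xc ξ = Uflat f T uT xc x + T * legendre f ((ξ - x) / T)}

/-- Oleinik condition (O) at `T`. -/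
def Oleinik (f : ℝ → ℝ) (T : ℝ) (uT : ℝ → ℝ) : Prop :=
  ∀ x Δ : ℝ, 0 < Δ → deriv f (uT (x + Δ)) - deriv f (uT x) ≤ Δ / T

/-- The Hopf–Lax operator at time `T`: `(S_T U)(x) = inf_ξ [U(ξ) + T f*((x−ξ)/T)]`. -/
noncomputable def HopfLax (f : ℝ → ℝ) (T : ℝ) (U : ℝ → ℝ) (x : ℝ) : ℝ :=
  sInf (Set.range fun ξ => U ξ + T * legendre f ((x - ξ) / T))

/-- Left continuity of a real function. -/
def LeftCts (u : ℝ → ℝ) : Prop :=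
  ∀ x, Tendsto u (nhdsWithin x (Set.Iio x)) (nhds (u x))

/-- `II_T(U_T; J)`: Lipschitz functions with a.e. derivative in `J` evolving into `U_T`
under the Hopf–Lax semigroup. -/
def IIT (f : ℝ → ℝ) (T : ℝ) (uT : ℝ → ℝ) (xc : ℝ) (J : Set ℝ) : Set (ℝ → ℝ) :=
  {U | (∃ K, LipschitzWith K U) ∧ (∀ᵐ x ∂volume, deriv U x ∈ J) ∧
    ∀ x, HopfLax f T U x = UT uT xc x}

/-- `U_o^♯(x) = sup { U(x) : U ∈ II_T(U_T; J) }`. -/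
noncomputable def Usharp (f : ℝ → ℝ) (T : ℝ) (uT : ℝ → ℝ) (xc : ℝ) (J : Set ℝ) (x : ℝ) : ℝ :=
  sSup ((fun U : ℝ → ℝ => U x) '' IIT f T uT xc J)

/-!
Write `h = (f')⁻¹`, so that `(f*)' = h`. The Oleinik condition gives `h((s - π b)/T) ≤ u_T(s)` for
`s ≤ b` and `u_T(s) ≤ h((s - π a)/T)` for `s ≥ a`; integrating, `x` maximizes
`ξ ↦ U_T(ξ) - T f*((ξ - π x)/T)`, i.e. `U_o^♭(π x) = U_T(x) - T f*((x - π x)/T)`. With this,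
(b) ⇒ (a) and the inequality `U_o^♭ ≤ U_o` of (a) ⇒ (b) are read off the Hopf–Lax formula. For the
equality on `π(ℝ)`, minimizers of the Hopf–Lax formula at `x' ↑ x` are trapped by the same bounds
and converge to `π x` by left continuity, so `π x` is a minimizer at `x`; the equality passes to the
closure by compactness, since `|x - π x| = T |f'(u_T x)|` is bounded.
-/

open Topology

/-- `T f*(y/T)`, the cost in the Hopf–Lax formula of a displacement `y` over time `T`. -/
noncomputable def hopfLaxKernel (f : ℝ → ℝ) (T y : ℝ) : ℝ := T * legendre f (y / T)

namespace CondF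

variable {f : ℝ → ℝ} (hf : CondF f)
include hf

theorem continuous_deriv : Continuous (deriv f) := hf.1.continuous_deriv one_le_two

theorem differentiable_deriv : Differentiable ℝ (deriv f) :=
  (contDiff_succ_iff_deriv.1 hf.1).2.2.differentiable one_ne_zero

theorem strictMono_deriv : StrictMono (deriv f) := strictMono_of_deriv_pos hf.2.1

theorem surjective_deriv : Function.Surjective (deriv f) :=
  hf.continuous_deriv.surjective hf.2.2.2 hf.2.2.1

noncomputable def derivIso : ℝ ≃o ℝ :=
  hf.strictMono_deriv.orderIsoOfSurjective _ hf.surjective_deriv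

@[simp] theorem derivIso_apply (x : ℝ) : hf.derivIso x = deriv f x := rfl

@[simp] theorem deriv_derivIso_symm (y : ℝ) : deriv f (hf.derivIso.symm y) = y :=
  hf.derivIso.apply_symm_apply y

theorem deriv_mul_sub_le (a b : ℝ) : deriv f a * (b - a) ≤ f b - f a := by
  have hdiff : Differentiable ℝ f := hf.1.differentiable two_ne_zero
  have hconv : ConvexOn ℝ Set.univ f :=
    hf.strictMono_deriv.monotone.convexOn_univ_of_deriv hdiff
  rcases lt_trichotomy a b with hab | rfl | hab
  · have := hconv.deriv_le_slope trivial trivial hab (hdiff a)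
    rwa [slope_def_field, le_div_iff₀ (sub_pos.2 hab)] at this
  · simp
  · have := hconv.slope_le_deriv trivial trivial hab (hdiff a)
    rw [slope_def_field, div_le_iff₀ (sub_pos.2 hab)] at this
    linarith

theorem isGreatest_legendre (y : ℝ) :
    IsGreatest (Set.range fun x => y * x - f x)
      (y * hf.derivIso.symm y - f (hf.derivIso.symm y)) := by
  refine ⟨⟨_, rfl⟩, ?_⟩
  rintro _ ⟨x, rfl⟩
  have := hf.deriv_mul_sub_le (hf.derivIso.symm y) x
  rw [deriv_derivIso_symm] at this
  dsimp only
  linarith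

theorem legendre_eq (y : ℝ) :
    legendre f y = y * hf.derivIso.symm y - f (hf.derivIso.symm y) :=
  (hf.isGreatest_legendre y).csSup_eq

theorem mul_sub_le_legendre (y x : ℝ) : y * x - f x ≤ legendre f y := by
  rw [hf.legendre_eq]
  exact (hf.isGreatest_legendre y).2 ⟨x, rfl⟩

theorem hasDerivAt_derivIso_symm (y : ℝ) :
    HasDerivAt hf.derivIso.symm (deriv (deriv f) (hf.derivIso.symm y))⁻¹ y :=
  HasDerivAt.of_local_left_inverse hf.derivIso.symm.continuous.continuousAt
    (hf.differentiable_deriv _).hasDerivAt (hf.2.1 _).ne'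
    (Eventually.of_forall hf.deriv_derivIso_symm)

theorem hasDerivAt_legendre (y : ℝ) : HasDerivAt (legendre f) (hf.derivIso.symm y) y := by
  have hg := hf.hasDerivAt_derivIso_symm y
  have hf' : HasDerivAt f y (hf.derivIso.symm y) := by
    simpa using ((hf.1.differentiable two_ne_zero) (hf.derivIso.symm y)).hasDerivAt
  rw [show legendre f = fun y => y * hf.derivIso.symm y - f (hf.derivIso.symm y) from
    funext hf.legendre_eq]
  exact (((hasDerivAt_id' y).mul hg).sub (hf'.comp y hg)).congr_deriv (by ring)

theorem continuous_legendre : Continuous (legendre f) :=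
  continuous_iff_continuousAt.2 fun y => (hf.hasDerivAt_legendre y).continuousAt

theorem mul_derivIso_symm_le_legendre_sub (y z : ℝ) :
    (z - y) * hf.derivIso.symm y ≤ legendre f z - legendre f y := by
  have := hf.mul_sub_le_legendre z (hf.derivIso.symm y)
  rw [hf.legendre_eq y]
  linarith

theorem continuous_derivIso_symm_div (c T : ℝ) :
    Continuous fun s => hf.derivIso.symm ((s - c) / T) :=
  hf.derivIso.symm.continuous.comp ((continuous_id.sub continuous_const).div_const T)

variable {T : ℝ} (hT : 0 < T)
include hT

theorem hasDerivAt_hopfLaxKernel (y : ℝ) :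
    HasDerivAt (hopfLaxKernel f T) (hf.derivIso.symm (y / T)) y := by
  have := ((hf.hasDerivAt_legendre (y / T)).comp y ((hasDerivAt_id' y).div_const T)).const_mul T
  exact this.congr_deriv (by field_simp)

theorem continuous_hopfLaxKernel : Continuous (hopfLaxKernel f T) :=
  continuous_iff_continuousAt.2 fun y => (hf.hasDerivAt_hopfLaxKernel hT y).continuousAt

theorem integral_derivIso_symm (a b c : ℝ) :
    ∫ s in a..b, hf.derivIso.symm ((s - c) / T)
      = hopfLaxKernel f T (b - c) - hopfLaxKernel f T (a - c) :=
  intervalIntegral.integral_eq_sub_of_hasDerivAt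
    (fun s _ => (hf.hasDerivAt_hopfLaxKernel hT (s - c)).comp_sub_const s c)
    ((hf.continuous_derivIso_symm_div c T).intervalIntegrable a b)

theorem mul_derivIso_symm_le_hopfLaxKernel_sub (y z : ℝ) :
    (z - y) * hf.derivIso.symm (y / T) ≤ hopfLaxKernel f T z - hopfLaxKernel f T y := by
  have := mul_le_mul_of_nonneg_left (hf.mul_derivIso_symm_le_legendre_sub (y / T) (z / T)) hT.le
  unfold hopfLaxKernel
  field_simp at this ⊢
  linarith

/-- A weak form of the monotonicity of the slopes of the kernel, from `(f*)' = (f')⁻¹`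
increasing. -/
theorem le_add_two_mul_of_hopfLaxKernel_sub_le {p q δ : ℝ} (hδ : 0 < δ)
    (h : hopfLaxKernel f T p - hopfLaxKernel f T (p - δ)
      ≤ hopfLaxKernel f T (q + δ) - hopfLaxKernel f T q) :
    p ≤ q + 2 * δ := by
  have h₁ := hf.mul_derivIso_symm_le_hopfLaxKernel_sub hT (p - δ) p
  have h₂ := hf.mul_derivIso_symm_le_hopfLaxKernel_sub hT (q + δ) q
  have : hf.derivIso.symm ((p - δ) / T) ≤ hf.derivIso.symm ((q + δ) / T) := by
    nlinarith
  have := div_le_div_iff_of_pos_right hT |>.1 (hf.derivIso.symm.le_iff_le.1 this)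
  linarith

theorem mul_abs_sub_le_hopfLaxKernel (L y : ℝ) :
    L * |y| - T * max (f L) (f (-L)) ≤ hopfLaxKernel f T y := by
  have hline : ∀ b, y * b - T * f b ≤ hopfLaxKernel f T y := fun b => by
    have := mul_le_mul_of_nonneg_left (hf.mul_sub_le_legendre (y / T) b) hT.le
    unfold hopfLaxKernel
    field_simp at this ⊢
    linarith
  rcases le_total 0 y with hy | hy
  · have := hline L
    rw [abs_of_nonneg hy]
    nlinarith [le_max_left (f L) (f (-L))]
  · have := hline (-L)
    rw [abs_of_nonpos hy]
    nlinarith [le_max_right (f L) (f (-L))]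

end CondF

section UT

variable {uT : ℝ → ℝ} {C : ℝ}

theorem intervalIntegrable_of_abs_le (huT : Measurable uT) (hC : ∀ x, |uT x| ≤ C) (a b : ℝ) :
    IntervalIntegrable uT volume a b :=
  (intervalIntegrable_const (c := C)).mono_fun' huT.aestronglyMeasurable
    (Eventually.of_forall fun x => (Real.norm_eq_abs _).trans_le (hC x))

variable (hint : ∀ a b, IntervalIntegrable uT volume a b)
include hint

theorem UT_sub_UT (xc a b : ℝ) : UT uT xc b - UT uT xc a = ∫ s in a..b, uT s :=
  intervalIntegral.integral_interval_sub_left (hint xc b) (hint xc a)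

theorem continuous_UT (xc : ℝ) : Continuous (UT uT xc) :=
  intervalIntegral.continuous_primitive hint xc

theorem UT_sub_UT_le (hC : ∀ x, |uT x| ≤ C) (xc a b : ℝ) :
    UT uT xc b - UT uT xc a ≤ C * |b - a| := by
  rw [UT_sub_UT hint]
  refine (le_abs_self _).trans ?_
  simpa using intervalIntegral.norm_integral_le_of_norm_le_const (a := a) (b := b)
    (fun s _ => (Real.norm_eq_abs (uT s)).trans_le (hC s))

end UT

/-- `π_{u_T}(x)`: the foot at time `0` of the backward characteristic issued from `(x, T)`. -/
noncomputable def charFoot (f : ℝ → ℝ) (T : ℝ) (uT : ℝ → ℝ) (x : ℝ) : ℝ := x - T * deriv f (uT x)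

theorem charFoot_tendsto_nhdsLT {f : ℝ → ℝ} (hf : CondF f) (T : ℝ) {uT : ℝ → ℝ}
    (hlc : LeftCts uT) (x : ℝ) :
    Tendsto (charFoot f T uT) (𝓝[<] x) (𝓝 (charFoot f T uT x)) :=
  (tendsto_id.mono_left nhdsWithin_le_nhds).sub
    (((hf.continuous_deriv.tendsto _).comp (hlc x)).const_mul T)

theorem tendsto_charFoot_of_le_of_le {f : ℝ → ℝ} (hf : CondF f) (T : ℝ) {uT : ℝ → ℝ}
    (hlc : LeftCts uT) {x : ℝ} {η : ℝ → ℝ}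
    (hlower : ∀ x' < x, charFoot f T uT (2 * x' - x) - (x - x') ≤ η x')
    (hupper : ∀ x' < x, η x' ≤ charFoot f T uT x + (x - x')) :
    Tendsto η (𝓝[<] x) (𝓝 (charFoot f T uT x)) := by
  have hdist : Tendsto (fun x' => x - x') (𝓝[<] x) (𝓝 0) :=
    ((continuous_const.sub continuous_id).tendsto' x 0 (sub_self x)).mono_left nhdsWithin_le_nhds
  have hreflect : Tendsto (fun x' => 2 * x' - x) (𝓝[<] x) (𝓝[<] x) := by
    refine tendsto_nhdsWithin_iff.2 ⟨(Continuous.tendsto' (by fun_prop) x x (by ring)).mono_left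
      nhdsWithin_le_nhds, eventually_nhdsWithin_of_forall fun x' hx' => ?_⟩
    simp only [Set.mem_Iio] at hx' ⊢
    linarith
  refine tendsto_of_tendsto_of_tendsto_of_le_of_le' ?_ ?_
    (eventually_nhdsWithin_of_forall hlower) (eventually_nhdsWithin_of_forall hupper)
  · simpa using ((charFoot_tendsto_nhdsLT hf T hlc x).comp hreflect).sub hdist
  · simpa using tendsto_const_nhds.add hdist

namespace Oleinik

variable {f : ℝ → ℝ} {T : ℝ} {uT : ℝ → ℝ} (hf : CondF f) (hT : 0 < T) (hO : Oleinik f T uT)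
include hf hT hO

theorem derivIso_symm_le {s b : ℝ} (hsb : s ≤ b) :
    hf.derivIso.symm ((s - charFoot f T uT b) / T) ≤ uT s := by
  rw [OrderIso.symm_apply_le, CondF.derivIso_apply, div_le_iff₀ hT]
  rcases hsb.eq_or_lt with rfl | hlt
  · simp [charFoot, mul_comm]
  · have := hO s (b - s) (sub_pos.2 hlt)
    rw [add_sub_cancel, le_div_iff₀ hT] at this
    simp only [charFoot]
    linarith

theorem le_derivIso_symm {a s : ℝ} (has : a ≤ s) :
    uT s ≤ hf.derivIso.symm ((s - charFoot f T uT a) / T) := by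
  rw [OrderIso.le_symm_apply, CondF.derivIso_apply, le_div_iff₀ hT]
  rcases has.eq_or_lt with rfl | hlt
  · simp [charFoot, mul_comm]
  · have := hO a (s - a) (sub_pos.2 hlt)
    rw [add_sub_cancel, le_div_iff₀ hT] at this
    simp only [charFoot]
    linarith

variable (hint : ∀ a b, IntervalIntegrable uT volume a b)
include hint

theorem hopfLaxKernel_sub_le_UT_sub (xc : ℝ)
    {a b : ℝ} (hab : a ≤ b) :
    hopfLaxKernel f T (b - charFoot f T uT b) - hopfLaxKernel f T (a - charFoot f T uT b)
      ≤ UT uT xc b - UT uT xc a := by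
  rw [UT_sub_UT hint, ← hf.integral_derivIso_symm hT]
  exact intervalIntegral.integral_mono_on hab
    ((hf.continuous_derivIso_symm_div _ T).intervalIntegrable a b) (hint a b)
    fun s hs => derivIso_symm_le hf hT hO hs.2

theorem UT_sub_le_hopfLaxKernel_sub (xc : ℝ)
    {a b : ℝ} (hab : a ≤ b) :
    UT uT xc b - UT uT xc a
      ≤ hopfLaxKernel f T (b - charFoot f T uT a) - hopfLaxKernel f T (a - charFoot f T uT a) := by
  rw [UT_sub_UT hint, ← hf.integral_derivIso_symm hT]
  exact intervalIntegral.integral_mono_on hab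
    (hint a b) ((hf.continuous_derivIso_symm_div _ T).intervalIntegrable a b)
    fun s hs => le_derivIso_symm hf hT hO hs.1

/-- Under (O), `x` maximizes `ξ ↦ U_T(ξ) - T f*((ξ - π x)/T)`. -/
theorem uflat_charFoot (xc x : ℝ) :
    Uflat f T uT xc (charFoot f T uT x)
      = UT uT xc x - hopfLaxKernel f T (x - charFoot f T uT x) := by
  refine IsGreatest.csSup_eq ⟨⟨x, rfl⟩, ?_⟩
  rintro _ ⟨ξ, rfl⟩
  change UT uT xc ξ - hopfLaxKernel f T (ξ - charFoot f T uT x) ≤ _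
  rcases le_total ξ x with hξ | hξ
  · linarith [hopfLaxKernel_sub_le_UT_sub hf hT hO hint xc hξ]
  · linarith [UT_sub_le_hopfLaxKernel_sub hf hT hO hint xc hξ]

section Localization

variable {xc x η : ℝ}
  (hη : ∀ ζ, UT uT xc ζ - UT uT xc x ≤ hopfLaxKernel f T (ζ - η) - hopfLaxKernel f T (x - η))
include hη

theorem charFoot_sub_le {ζ : ℝ} (hζ : ζ < x) : charFoot f T uT ζ - (x - ζ) ≤ η := by
  have h := hf.le_add_two_mul_of_hopfLaxKernel_sub_le hT (p := x - η)
    (q := ζ - charFoot f T uT ζ) (sub_pos.2 hζ) ?_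
  · linarith
  rw [show x - η - (x - ζ) = ζ - η by ring, show ζ - charFoot f T uT ζ + (x - ζ)
    = x - charFoot f T uT ζ by ring]
  linarith [hη ζ, UT_sub_le_hopfLaxKernel_sub hf hT hO hint xc hζ.le]

theorem le_charFoot_add {w : ℝ} (hw : x < w) : η ≤ charFoot f T uT w + (w - x) := by
  have h := hf.le_add_two_mul_of_hopfLaxKernel_sub_le hT (p := w - charFoot f T uT w)
    (q := x - η) (sub_pos.2 hw) ?_
  · linarith
  rw [show w - charFoot f T uT w - (w - x) = x - charFoot f T uT w by ring,
    show x - η + (w - x) = w - η by ring]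
  linarith [hη w, hopfLaxKernel_sub_le_UT_sub hf hT hO hint xc hw.le]

end Localization

end Oleinik

namespace CondF

variable {f : ℝ → ℝ} (hf : CondF f) {T : ℝ} (hT : 0 < T) {uT : ℝ → ℝ} {C : ℝ} {U : ℝ → ℝ}
include hf hT

theorem le_uflat (hint : ∀ a b, IntervalIntegrable uT volume a b) (hC : ∀ x, |uT x| ≤ C)
    (xc x ξ : ℝ) : UT uT xc ξ - hopfLaxKernel f T (ξ - x) ≤ Uflat f T uT xc x := by
  refine le_csSup ⟨UT uT xc x + T * max (f C) (f (-C)), ?_⟩ ⟨ξ, rfl⟩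
  rintro _ ⟨ξ, rfl⟩
  change UT uT xc ξ - hopfLaxKernel f T (ξ - x) ≤ _
  linarith [UT_sub_UT_le hint hC xc x ξ, hf.mul_abs_sub_le_hopfLaxKernel hT C (ξ - x)]

variable {xc : ℝ}

section HopfLax

variable {K : NNReal} (hU : LipschitzWith K U)
include hU

theorem add_abs_sub_le_add_hopfLaxKernel (x ξ : ℝ) :
    U x - T * max (f (K + 1)) (f (-(K + 1))) + |ξ - x| ≤ U ξ + hopfLaxKernel f T (x - ξ) := by
  have hK : U x - U ξ ≤ K * |ξ - x| := by
    simpa [Real.dist_eq, abs_sub_comm] using (le_abs_self _).trans (hU.dist_le_mul x ξ)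
  have := hf.mul_abs_sub_le_hopfLaxKernel hT (K + 1) (x - ξ)
  rw [abs_sub_comm] at this
  linarith

theorem hopfLax_le (x ξ : ℝ) : HopfLax f T U x ≤ U ξ + hopfLaxKernel f T (x - ξ) :=
  csInf_le ⟨_, by rintro _ ⟨η, rfl⟩; exact
    (le_add_of_nonneg_right (abs_nonneg _)).trans (hf.add_abs_sub_le_add_hopfLaxKernel hT hU x η)⟩
    ⟨ξ, rfl⟩

theorem exists_hopfLax_eq (x : ℝ) : ∃ η, HopfLax f T U x = U η + hopfLaxKernel f T (x - η) := by
  have hcont : Continuous fun ξ => U ξ + hopfLaxKernel f T (x - ξ) :=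
    hU.continuous.add ((hf.continuous_hopfLaxKernel hT).comp (continuous_const.sub continuous_id))
  have hcoercive : Tendsto (fun ξ => U ξ + hopfLaxKernel f T (x - ξ)) (cocompact ℝ) atTop := by
    refine tendsto_atTop_mono (fun ξ => (?_ : _ ≤ _).trans
      (hf.add_abs_sub_le_add_hopfLaxKernel hT hU x ξ)) (tendsto_atTop_add_const_left _
        (U x - T * max (f (K + 1)) (f (-(K + 1))) - |x|) tendsto_norm_cocompact_atTop)
    have := abs_sub_abs_le_abs_sub ξ x
    rw [Real.norm_eq_abs]
    linarith
  obtain ⟨η, hη⟩ := hcont.exists_forall_le hcoercive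
  exact ⟨η, IsLeast.csInf_eq ⟨⟨η, rfl⟩, by rintro _ ⟨ξ, rfl⟩; exact hη ξ⟩⟩

theorem uflat_le_of_hopfLax_eq (hS : ∀ x, HopfLax f T U x = UT uT xc x) (x : ℝ) :
    Uflat f T uT xc x ≤ U x := by
  refine csSup_le (Set.range_nonempty _) ?_
  rintro _ ⟨ξ, rfl⟩
  change UT uT xc ξ - hopfLaxKernel f T (ξ - x) ≤ _
  linarith [hS ξ ▸ hf.hopfLax_le hT hU ξ x]

theorem hopfLax_eq_of_uflat (hO : Oleinik f T uT) (hint : ∀ a b, IntervalIntegrable uT volume a b)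
    (hC : ∀ x, |uT x| ≤ C) (hle : ∀ x, Uflat f T uT xc x ≤ U x)
    (heq : ∀ y, U (charFoot f T uT y) = Uflat f T uT xc (charFoot f T uT y)) (x : ℝ) :
    HopfLax f T U x = UT uT xc x := by
  refine le_antisymm ?_ (le_csInf (Set.range_nonempty _) ?_)
  · have := hf.hopfLax_le hT hU x (charFoot f T uT x)
    rwa [heq, Oleinik.uflat_charFoot hf hT hO hint, sub_add_cancel] at this
  · rintro _ ⟨η, rfl⟩
    change _ ≤ U η + hopfLaxKernel f T (x - η)
    linarith [hf.le_uflat hT hint hC xc η x, hle η]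

/-- Minimizers of the Hopf–Lax formula at `x' ↑ x` are squeezed onto `π x`, so `π x` is a
minimizer at `x`. -/
theorem hopfLax_charFoot (hO : Oleinik f T uT) (hlc : LeftCts uT)
    (hint : ∀ a b, IntervalIntegrable uT volume a b) (hS : ∀ x, HopfLax f T U x = UT uT xc x)
    (x : ℝ) : U (charFoot f T uT x) + hopfLaxKernel f T (x - charFoot f T uT x) = UT uT xc x := by
  choose η hη using fun x' => hf.exists_hopfLax_eq hT hU x'
  have hval (x' : ℝ) : UT uT xc x' = U (η x') + hopfLaxKernel f T (x' - η x') :=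
    (hS x').symm.trans (hη x')
  have hloc (x' ζ : ℝ) : UT uT xc ζ - UT uT xc x'
      ≤ hopfLaxKernel f T (ζ - η x') - hopfLaxKernel f T (x' - η x') := by
    linarith [hS ζ ▸ hf.hopfLax_le hT hU ζ (η x'), hval x']
  have hη_lim : Tendsto η (𝓝[<] x) (𝓝 (charFoot f T uT x)) := by
    refine tendsto_charFoot_of_le_of_le hf T hlc (fun x' hx' => ?_)
      (fun x' hx' => Oleinik.le_charFoot_add hf hT hO hint (hloc x') hx')
    have := Oleinik.charFoot_sub_le hf hT hO hint (hloc x') (ζ := 2 * x' - x) (by linarith)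
    rwa [show x' - (2 * x' - x) = x - x' by ring] at this
  have hUT_lim : Tendsto (UT uT xc) (𝓝[<] x) (𝓝 (UT uT xc x)) :=
    ((continuous_UT hint xc).tendsto x).mono_left nhdsWithin_le_nhds
  refine tendsto_nhds_unique (Tendsto.congr (fun x' => (hval x').symm) ?_) hUT_lim
  exact ((hU.continuous.tendsto _).comp hη_lim).add
    (((hf.continuous_hopfLaxKernel hT).tendsto _).comp
      ((tendsto_id.mono_left nhdsWithin_le_nhds).sub hη_lim))

end HopfLax

/-- The feet `y n` of points `π (y n) → x` stay within distance `T ‖f'‖_{[-C, C]}` of `x`, so a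
subsequence converges to some `y`, and `y` is a competitor in the supremum defining `U_o^♭(x)`. -/
theorem le_uflat_of_mem_closure (hint : ∀ a b, IntervalIntegrable uT volume a b)
    (hC : ∀ x, |uT x| ≤ C) (hU : Continuous U)
    (hval : ∀ y, U (charFoot f T uT y) + hopfLaxKernel f T (y - charFoot f T uT y) = UT uT xc y)
    {x : ℝ} (hx : x ∈ closure (Set.range (charFoot f T uT))) : U x ≤ Uflat f T uT xc x := by
  obtain ⟨z, hz, hzx⟩ := mem_closure_iff_seq_limit.1 hx
  choose y hy using hz
  have hbound (n : ℕ) : deriv f (uT (y n)) ∈ Set.Icc (deriv f (-C)) (deriv f C) :=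
    ⟨hf.strictMono_deriv.monotone (neg_le_of_abs_le (hC _)),
      hf.strictMono_deriv.monotone (le_of_abs_le (hC _))⟩
  obtain ⟨t, -, φ, hφ, htφ⟩ := isCompact_Icc.tendsto_subseq hbound
  have hzφ := hzx.comp hφ.tendsto_atTop
  have hyφ : Tendsto (y ∘ φ) atTop (𝓝 (x + T * t)) := by
    refine (hzφ.add (htφ.const_mul T)).congr fun n => ?_
    simp only [Function.comp_apply, ← hy, charFoot]
    ring
  have hlim : Tendsto (U ∘ z ∘ φ) atTop
      (𝓝 (UT uT xc (x + T * t) - hopfLaxKernel f T (x + T * t - x))) := by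
    refine ((((continuous_UT hint xc).tendsto _).comp hyφ).sub
      (((hf.continuous_hopfLaxKernel hT).tendsto _).comp (hyφ.sub hzφ))).congr fun n => ?_
    simp only [Function.comp_apply, ← hy]
    linarith [hval (y (φ n))]
  rw [tendsto_nhds_unique ((hU.tendsto x).comp hzφ) hlim]
  exact hf.le_uflat hT hint hC xc x _

end CondF

theorem stmt_13_general (f : ℝ → ℝ) (hf : CondF f) (T : ℝ) (hT : 0 < T)
    (J : Set ℝ)
    (uT : ℝ → ℝ) (huT : Measurable uT) (C : ℝ) (hC : ∀ x, |uT x| ≤ C)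
    (hlc : LeftCts uT) (hO : Oleinik f T uT) (xc : ℝ)
    (Uo : ℝ → ℝ) (hUoLip : ∃ K, LipschitzWith K Uo) :
    ((∀ x : ℝ, HopfLax f T Uo x = UT uT xc x) ∧ (∀ᵐ x ∂volume, deriv Uo x ∈ J)) ↔
      ((∀ x : ℝ, Uflat f T uT xc x ≤ Uo x) ∧
        (∀ x ∈ closure (Set.range fun y => y - T * deriv f (uT y)),
          Uo x = Uflat f T uT xc x) ∧
        (∀ᵐ x ∂volume, deriv Uo x ∈ J)) := by
  obtain ⟨K, hK⟩ := hUoLip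
  have hint := intervalIntegrable_of_abs_le huT hC
  constructor
  · rintro ⟨hS, hJ⟩
    have hle := hf.uflat_le_of_hopfLax_eq hT hK hS
    refine ⟨hle, fun x hx => le_antisymm ?_ (hle x), hJ⟩
    exact hf.le_uflat_of_mem_closure hT hint hC hK.continuous
      (hf.hopfLax_charFoot hT hK hO hlc hint hS) hx
  · rintro ⟨hle, heq, hJ⟩
    exact ⟨hf.hopfLax_eq_of_uflat hT hK hO hint hC hle
      (fun y => heq _ (subset_closure ⟨y, rfl⟩)), hJ⟩

theorem stmt_13 (f : ℝ → ℝ) (hf : CondF f) (T : ℝ) (hT : 0 < T)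
    (J : Set ℝ) (hJne : J.Nonempty) (hJcl : IsClosed J) (hJoc : J.OrdConnected)
    (uT : ℝ → ℝ) (huT : Measurable uT) (C : ℝ) (hC : ∀ x, |uT x| ≤ C)
    (hlc : LeftCts uT) (huTJ : ∀ x, uT x ∈ J) (hO : Oleinik f T uT) (xc : ℝ)
    (Uo : ℝ → ℝ) (hUoLip : ∃ K, LipschitzWith K Uo) :
    ((∀ x : ℝ, HopfLax f T Uo x = UT uT xc x) ∧ (∀ᵐ x ∂volume, deriv Uo x ∈ J)) ↔
      ((∀ x : ℝ, Uflat f T uT xc x ≤ Uo x) ∧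
        (∀ x ∈ closure (Set.range fun y => y - T * deriv f (uT y)),
          Uo x = Uflat f T uT xc x) ∧
        (∀ᵐ x ∂volume, deriv Uo x ∈ J)) :=
  stmt_13_general f hf T hT J uT huT C hC hlc hO xc Uo hUoLip
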